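/- A locally finite (ordinary, i.e., all distances finite) metric space X is amenable if and only if it is properly amenable. -/
import Mathlib


/-- A metric space is locally finite if every bounded set (closed ball) is finite. -/
def LocallyFiniteMS (X : Type*) [MetricSpace X] : Prop :=
  ∀ (x : X) (R : ℝ), {y : X | dist x y ≤ R}.Finite

/-- The `R`-boundary of a set `F`. -/
def rBoundary {X : Type*} [MetricSpace X] (R : ℝ) (F : Set X) : Set X :=
  {x : X | (∃ y ∈ F, dist x y ≤ R) ∧ (∃ y ∉ F, dist x y ≤ R)}

/-- `F` is an `(R, ε)`-Følner set: finite, nonempty, with `|∂_R F| ≤ ε·|F|`. -/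
def IsFolnerSet {X : Type*} [MetricSpace X] (R ε : ℝ) (F : Set X) : Prop :=
  F.Finite ∧ F.Nonempty ∧ ((rBoundary R F).ncard : ℝ) ≤ ε * F.ncard

/-- `X` is amenable. -/
def Amenable (X : Type*) [MetricSpace X] : Prop :=
  ∀ R > (0:ℝ), ∀ ε > (0:ℝ), ∃ F : Set X, IsFolnerSet R ε F

/-- `X` is properly amenable. -/
def ProperlyAmenable (X : Type*) [MetricSpace X] : Prop :=
  ∀ R > (0:ℝ), ∀ ε > (0:ℝ), ∀ A : Set X, A.Finite →
    ∃ F : Set X, IsFolnerSet R ε F ∧ A ⊆ F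

open Set

lemma rBoundary_mono {X : Type*} [MetricSpace X] {R R' : ℝ} (h : R ≤ R') (F : Set X) :
    rBoundary R F ⊆ rBoundary R' F := by
  rintro x ⟨⟨y, hy, hd⟩, ⟨z, hz, hd'⟩⟩
  exact ⟨⟨y, hy, hd.trans h⟩, ⟨z, hz, hd'.trans h⟩⟩

lemma rBoundary_finite {X : Type*} [MetricSpace X] (hlf : LocallyFiniteMS X) (R : ℝ)
    {F : Set X} (hF : F.Finite) : (rBoundary R F).Finite := by
  apply Set.Finite.subset (hF.biUnion (fun y _ => hlf y R))
  rintro x ⟨⟨y, hy, hd⟩, -⟩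
  exact Set.mem_biUnion hy (by simpa [dist_comm] using hd)

/-- Key lemma: an infinite amenable locally finite metric space has arbitrarily
large Følner sets. -/
lemma exists_large_folner {X : Type*} [MetricSpace X] (hlf : LocallyFiniteMS X)
    (hinf : (Set.univ : Set X).Infinite) (hA : Amenable X)
    {R ε : ℝ} (hR : 0 < R) (hε : 0 < ε) (n : ℕ) :
    ∃ F : Set X, IsFolnerSet R ε F ∧ (n : ℝ) ≤ F.ncard := by
  classical
  set U : Set X := {x | ∃ F : Set X, F.Finite ∧ rBoundary R F = ∅ ∧ x ∈ F} with hUdef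
  by_cases hU : U.Finite
  · -- U finite: pick a point outside U, and a large radius R' so that no nonempty
    -- finite set has empty R'-boundary.
    obtain ⟨z₀, hz₀⟩ : ∃ z, z ∉ U := by
      by_contra h
      push_neg at h
      exact hinf (hU.subset (fun x _ => h x))
    obtain ⟨M, hM⟩ : ∃ M : ℝ, ∀ u ∈ U, dist u z₀ ≤ M := by
      obtain ⟨M, hM⟩ := (hU.image (fun u => dist u z₀)).bddAbove
      exact ⟨M, fun u hu => hM (Set.mem_image_of_mem _ hu)⟩
    set R' : ℝ := max R M with hR'def
    have hRR' : R ≤ R' := le_max_left _ _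
    have hMR' : M ≤ R' := le_max_right _ _
    have hR' : 0 < R' := lt_of_lt_of_le hR hRR'
    set δ : ℝ := min ε (1 / (n + 1)) with hδdef
    have hδ : 0 < δ := lt_min hε (by positivity)
    obtain ⟨F, hFfin, hFne, hFbd⟩ := hA R' hR' δ hδ
    -- The R'-boundary of F is nonempty.
    have hbne : (rBoundary R' F).Nonempty := by
      rw [Set.nonempty_iff_ne_empty]
      intro hempty
      have hRFempty : rBoundary R F = ∅ :=
        Set.eq_empty_of_subset_empty (hempty ▸ rBoundary_mono hRR' F)
      have hFU : F ⊆ U := fun x hx => ⟨F, hFfin, hRFempty, hx⟩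
      obtain ⟨y, hy⟩ := hFne
      have hz₀F : z₀ ∉ F := fun h => hz₀ (hFU h)
      have : y ∈ rBoundary R' F :=
        ⟨⟨y, hy, by simp [dist_self, hR'.le]⟩,
         ⟨z₀, hz₀F, (hM y (hFU hy)).trans hMR'⟩⟩
      rw [hempty] at this
      exact this
    have hbfin : (rBoundary R' F).Finite := rBoundary_finite hlf R' hFfin
    have h1 : (1 : ℝ) ≤ (rBoundary R' F).ncard := by
      have := (Set.ncard_pos hbfin).mpr hbne
      exact_mod_cast this
    have hδε : δ ≤ ε := min_le_left _ _
    have hδn : δ ≤ 1 / (n + 1) := min_le_right _ _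
    have hFlarge : (n : ℝ) ≤ F.ncard := by
      have h2 : (1 : ℝ) ≤ δ * F.ncard := h1.trans hFbd
      have h3 : (n + 1 : ℝ) ≤ F.ncard := by
        have hδn' : δ * (n + 1) ≤ 1 :=
          (le_div_iff₀ (by positivity : (0:ℝ) < (n:ℝ) + 1)).mp hδn
        nlinarith [hδ]
      linarith
    refine ⟨F, ⟨hFfin, hFne, ?_⟩, hFlarge⟩
    have hsub : (((rBoundary R F).ncard : ℝ)) ≤ (rBoundary R' F).ncard := by
      exact_mod_cast Set.ncard_le_ncard (rBoundary_mono hRR' F) hbfin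
    have : ((rBoundary R F).ncard : ℝ) ≤ δ * F.ncard := hsub.trans hFbd
    have hF0 : (0:ℝ) ≤ F.ncard := by positivity
    nlinarith
  · -- U infinite: finite unions of empty-boundary sets give big empty-boundary sets.
    have h : ∀ x : X, ∃ F : Set X,
        x ∈ U → (F.Finite ∧ rBoundary R F = ∅ ∧ x ∈ F) := by
      intro x
      by_cases hx : x ∈ U
      · obtain ⟨F, hF⟩ := hx
        exact ⟨F, fun _ => hF⟩
      · exact ⟨∅, fun h => absurd h hx⟩
    choose f hf using h
    obtain ⟨T, hTU, hTfin, hTcard⟩ :=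
      Set.Infinite.exists_subset_ncard_eq hU (n + 1)
    set G : Set X := ⋃ t ∈ T, f t with hGdef
    have hGfin : G.Finite := hTfin.biUnion fun t ht => (hf t (hTU ht)).1
    have hTG : T ⊆ G := fun t ht => Set.mem_biUnion ht (hf t (hTU ht)).2.2
    have hGne : G.Nonempty := by
      have : T.Nonempty := by
        rw [← Set.ncard_pos hTfin] at *
        omega
      exact this.mono hTG
    have hGbd : rBoundary R G = ∅ := by
      ext x
      simp only [Set.mem_empty_iff_false, iff_false]
      rintro ⟨⟨y, hy, hd⟩, ⟨z, hz, hd'⟩⟩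
      obtain ⟨t, ht, hyt⟩ := Set.mem_iUnion₂.mp hy
      have hzt : z ∉ f t := fun h => hz (Set.mem_biUnion ht h)
      have : x ∈ rBoundary R (f t) := ⟨⟨y, hyt, hd⟩, ⟨z, hzt, hd'⟩⟩
      rw [(hf t (hTU ht)).2.1] at this
      exact this
    refine ⟨G, ⟨hGfin, hGne, ?_⟩, ?_⟩
    · rw [hGbd]
      simp only [Set.ncard_empty, Nat.cast_zero]
      positivity
    · have : (n + 1 : ℕ) ≤ G.ncard := hTcard ▸ Set.ncard_le_ncard hTG hGfin
      exact_mod_cast le_trans (by exact_mod_cast Nat.le_succ n) this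

theorem stmt5 {X : Type*} [MetricSpace X] (hlf : LocallyFiniteMS X) :
    Amenable X ↔ ProperlyAmenable X := by
  constructor
  · intro ham R hR ε hε A hAfin
    by_cases hfin : (Set.univ : Set X).Finite
    · -- X finite: take F = univ.
      obtain ⟨F₀, _, hne, _⟩ := ham 1 one_pos 1 one_pos
      have huniv : rBoundary R (Set.univ : Set X) = ∅ := by
        ext x
        simp [rBoundary]
      refine ⟨Set.univ, ⟨hfin, ⟨hne.some, trivial⟩, ?_⟩, Set.subset_univ A⟩
      rw [huniv]
      simp only [Set.ncard_empty, Nat.cast_zero]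
      positivity
    · -- X infinite: use a large Følner set.
      set C : Set X := {x : X | ∃ a ∈ A, dist x a ≤ R} with hCdef
      have hCfin : C.Finite := by
        apply Set.Finite.subset (hAfin.biUnion (fun a _ => hlf a R))
        rintro x ⟨a, ha, hd⟩
        exact Set.mem_biUnion ha (by simpa [dist_comm] using hd)
      obtain ⟨n, hn⟩ := exists_nat_ge (2 * C.ncard / ε)
      obtain ⟨F, ⟨hFfin, hFne, hFbd⟩, hFcard⟩ :=
        exists_large_folner hlf hfin ham hR (half_pos hε) n
      have hCbound : (C.ncard : ℝ) ≤ ε / 2 * n := by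
        rw [div_le_iff₀ hε] at hn
        linarith
      refine ⟨F ∪ A, ⟨hFfin.union hAfin, hFne.mono Set.subset_union_left, ?_⟩,
        Set.subset_union_right⟩
      have hsub : rBoundary R (F ∪ A) ⊆ rBoundary R F ∪ C := by
        rintro x ⟨⟨y, hy, hd⟩, ⟨z, hz, hd'⟩⟩
        rcases hy with hy | hy
        · exact Or.inl ⟨⟨y, hy, hd⟩, ⟨z, fun h => hz (Or.inl h), hd'⟩⟩
        · exact Or.inr ⟨y, hy, hd⟩
      have hbfin : (rBoundary R F).Finite := rBoundary_finite hlf R hFfin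
      have h1 : ((rBoundary R (F ∪ A)).ncard : ℝ) ≤
          (rBoundary R F).ncard + C.ncard := by
        have := Set.ncard_le_ncard hsub (hbfin.union hCfin)
        have h2 := Set.ncard_union_le (rBoundary R F) C
        exact_mod_cast le_trans this h2
      have hmono : ((F.ncard : ℝ)) ≤ (F ∪ A).ncard := by
        exact_mod_cast Set.ncard_le_ncard Set.subset_union_left (hFfin.union hAfin)
      have hF0 : (0:ℝ) ≤ F.ncard := by positivity
      nlinarith
  · intro h R hR ε hε
    obtain ⟨F, hF, _⟩ := h R hR ε hε ∅ Set.finite_empty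
    exact ⟨F, hF⟩
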